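/- Define U₄ = F₂[c]/(1+c+c²) ⊕ F₂[c]/(1+c+c²)·x with c acting by multiplication and b acting by b·1 = 1, b·c = c², b·x = 1 + c·x (extended using bc = c²b). Then U₄ is a well-defined faithful 4-dimensional F₂-representation of Γ_Δ, and as a representation of the subgroup C₄ = ⟨b⟩ it is isomorphic to the regular representation F₂[b]/(b+1)⁴, via the map sending 1 ↦ 1+b+b²+b³, c ↦ 1+b², x ↦ 1, cx ↦ 1+b²+b³. -/

import Mathlib

open Polynomial

set_option synthInstance.maxHeartbeats 400000

/-- Relations for `Γ_Δ = C₃ ⋊ C₄ = ⟨c, b | c³ = 1, b⁴ = 1, bc = c²b⟩`,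
generators `c = of 0`, `b = of 1`. -/
def sdRels : Set (FreeGroup (Fin 2)) :=
  {FreeGroup.of 0 ^ 3, FreeGroup.of 1 ^ 4,
   FreeGroup.of 1 * FreeGroup.of 0 * (FreeGroup.of 0 ^ 2 * FreeGroup.of 1)⁻¹}

/-- `F₄ = F₂[c]/(1 + c + c²)`, the field with four elements. -/
noncomputable abbrev F4 : Type :=
  (ZMod 2)[X] ⧸ Ideal.span {(1 + X + X ^ 2 : (ZMod 2)[X])}

/-- The class of `c` in `F₄`. -/
noncomputable def gam : F4 :=
  Ideal.Quotient.mk (Ideal.span {(1 + X + X ^ 2 : (ZMod 2)[X])}) X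

/-- `R₄ = F₂[b]/(b+1)⁴`, the regular representation of `C₄` over `F₂`. -/
noncomputable abbrev R4 : Type :=
  (ZMod 2)[X] ⧸ Ideal.span {((X : (ZMod 2)[X]) + 1) ^ 4}

/-- The class of `b` in `R₄`. -/
noncomputable def bbar : R4 :=
  Ideal.Quotient.mk (Ideal.span {((X : (ZMod 2)[X]) + 1) ^ 4}) X

/-!
Since `F₄` is a field of characteristic two with four elements, squaring is additive and
`u⁴ = u`; hence `b² (u, v) = (u + c v, v)`, so `b⁴ = 1`, and `bc = c²b` is a direct check: the
formulas define a representation of `Γ_Δ`. Every element of `Γ_Δ` is `cⁱ bʲ` with `i < 3`,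
`j < 4`, and under `b` the vector `x = (0, 1)` runs through `x, (1, c), (c, 1), (c, c)`; scaling
by `cⁱ` then shows that only the identity fixes `x`, which gives faithfulness.

Because `(b + 1)⁴ = b⁴ - 1` in characteristic two, `F₂[b]/(b+1)⁴` acts on `U₄` through `b`,
and `r ↦ r • x` is a `b`-equivariant map `F₂[b]/(b+1)⁴ → U₄`. It hits the basis `1, c, x, c x`
at the prescribed elements, so it is onto, hence bijective by dimension count, and its inverse
is the required isomorphism.
-/

theorem exists_eq_pow_mul_pow_of_mem_closure {G : Type*} [Group G] {c b : G} {k : ℕ}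
    (hc : IsOfFinOrder c) (hb : IsOfFinOrder b) (hbc : b * c = c ^ k * b) {g : G} (hg : g ∈ Subgroup.closure {c, b}) :
    ∃ i j : ℕ, g = c ^ i * b ^ j := by
  rw [← Subgroup.mem_toSubmonoid, Subgroup.closure_toSubmonoid_of_isOfFinOrder
    (by rintro x (rfl | rfl) <;> assumption)] at hg
  induction hg using Submonoid.closure_induction_left with
  | one => exact ⟨0, 0, by simp⟩
  | mul_left x hx y _ ih =>
    obtain ⟨i, j, rfl⟩ := ih
    rcases hx with rfl | rfl
    · exact ⟨i + 1, j, by rw [← mul_assoc, ← pow_succ']⟩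
    · refine ⟨k * i, j + 1, ?_⟩
      rw [← mul_assoc, (SemiconjBy.pow_right hbc i).eq, ← pow_mul, mul_assoc, ← pow_succ']

lemma irreducible_one_add_X_add_X_sq : Irreducible (1 + X + X ^ 2 : (ZMod 2)[X]) := by
  apply Polynomial.irreducible_of_degree_le_three_of_not_isRoot
  · rw [show (1 + X + X ^ 2 : (ZMod 2)[X]).natDegree = 2 by compute_degree!]
    decide
  · simp only [IsRoot, eval_add, eval_one, eval_X, eval_pow]
    decide

instance : (Ideal.span {(1 + X + X ^ 2 : (ZMod 2)[X])}).IsMaximal :=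
  PrincipalIdealRing.isMaximal_of_irreducible irreducible_one_add_X_add_X_sq

noncomputable instance : Field F4 := Ideal.Quotient.field _

instance : CharP F4 2 := charP_of_injective_algebraMap (algebraMap (ZMod 2) F4).injective 2

lemma finrank_F4 : Module.finrank (ZMod 2) F4 = 2 := by
  rw [finrank_quotient_span_eq_natDegree]
  compute_degree!

lemma finrank_R4 : Module.finrank (ZMod 2) R4 = 4 := by
  rw [finrank_quotient_span_eq_natDegree]
  compute_degree!

instance : Module.Finite (ZMod 2) F4 :=
  Module.finite_of_finrank_pos (by rw [finrank_F4]; norm_num)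

instance : Module.Finite (ZMod 2) R4 :=
  Module.finite_of_finrank_pos (by rw [finrank_R4]; norm_num)

noncomputable instance : Fintype F4 :=
  haveI := Module.finite_of_finite (ZMod 2) (M := F4)
  Fintype.ofFinite _

lemma card_F4 : Fintype.card F4 = 4 := by
  rw [Module.card_eq_pow_finrank (K := ZMod 2), finrank_F4, ZMod.card]; rfl

lemma F4.pow_four_eq_self (u : F4) : u ^ 4 = u := by
  simpa [card_F4] using FiniteField.pow_card u

lemma gam_sq : gam ^ 2 = gam + 1 := by
  have h : Ideal.Quotient.mk (Ideal.span {(1 + X + X ^ 2 : (ZMod 2)[X])}) (1 + X + X ^ 2) = 0 :=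
    Ideal.Quotient.eq_zero_iff_mem.2 (Ideal.mem_span_singleton_self _)
  rw [map_add, map_add, map_one, map_pow] at h
  change 1 + gam + gam ^ 2 = 0 at h
  linear_combination h - (gam + 1) * CharTwo.two_eq_zero (R := F4)

lemma gam_pow_three : gam ^ 3 = 1 := by
  linear_combination (gam + 1) * gam_sq + gam * CharTwo.two_eq_zero (R := F4)

lemma gam_ne_zero : gam ≠ 0 := by
  rintro h
  simpa [h] using gam_pow_three

lemma gam_ne_one : gam ≠ 1 := by
  rintro h
  simpa [h, CharTwo.add_self_eq_zero] using gam_sq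

lemma orderOf_gam : orderOf gam = 3 :=
  orderOf_eq_prime gam_pow_three gam_ne_one

lemma span_one_gam : Submodule.span (ZMod 2) {1, gam} = ⊤ := by
  have hli : LinearIndependent (ZMod 2) ![1, gam] := by
    refine (LinearIndependent.pair_iff' one_ne_zero).2 fun a ha => ?_
    have : gam ^ 2 = gam := by rw [← ha, _root_.smul_pow, one_pow, ZMod.pow_card]
    simp [gam_sq] at this
  rw [Set.pair_comm]
  simpa using hli.span_eq_top_of_card_eq_finrank (by rw [finrank_F4, Fintype.card_fin])

noncomputable def actC : Module.End (ZMod 2) (F4 × F4) :=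
  DistribMulAction.toModuleEnd (ZMod 2) (F4 × F4) gam

lemma actC_apply (u v : F4) : actC (u, v) = (gam * u, gam * v) := rfl

lemma actC_pow_apply (i : ℕ) (w : F4 × F4) : (actC ^ i) w = gam ^ i • w := by
  rw [actC, ← map_pow]; rfl

lemma actC_pow_three : actC ^ 3 = 1 := by
  rw [actC, ← map_pow, gam_pow_three, map_one]

noncomputable def actB : Module.End (ZMod 2) (F4 × F4) := AddMonoidHom.toZModLinearMap 2
  { toFun w := (w.1 ^ 2 + w.2 ^ 2, gam * w.2 ^ 2)
    map_zero' := by simp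
    map_add' w w' := by
      simp only [Prod.fst_add, Prod.snd_add, CharTwo.add_sq, Prod.mk_add_mk, mul_add]
      congr 1; ring }

lemma actB_apply (u v : F4) : actB (u, v) = (u ^ 2 + v ^ 2, gam * v ^ 2) := rfl

lemma actB_actB (u v : F4) : actB (actB (u, v)) = (u + gam * v, v) := by
  rw [actB_apply, actB_apply, Prod.mk.injEq]
  constructor
  · linear_combination F4.pow_four_eq_self u + (1 + gam ^ 2) * F4.pow_four_eq_self v +
      v * gam_sq + (u ^ 2 * v ^ 2 + v) * CharTwo.two_eq_zero (R := F4)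
  · linear_combination v ^ 4 * gam_pow_three + F4.pow_four_eq_self v

lemma actB_pow_four : actB ^ 4 = 1 := by
  refine LinearMap.ext fun ⟨u, v⟩ => ?_
  simp only [pow_succ, pow_zero, one_mul, Module.End.mul_apply, actB_actB, add_assoc,
    CharTwo.add_self_eq_zero, add_zero, Module.End.one_apply]

lemma actB_mul_actC : actB * actC = actC ^ 2 * actB := by
  refine LinearMap.ext fun ⟨u, v⟩ => ?_
  simp only [Module.End.mul_apply, actC_pow_apply, actC_apply, actB_apply, Prod.smul_mk,
    smul_eq_mul, Prod.mk.injEq]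
  constructor <;> ring

lemma actB_zero_one : actB (0, 1) = (1, gam) := by simp [actB_apply]

lemma actB_one_gam : actB (1, gam) = (gam, 1) := by
  rw [actB_apply, Prod.mk.injEq]
  constructor
  · linear_combination gam_sq + CharTwo.two_eq_zero (R := F4)
  · linear_combination gam_pow_three

lemma actB_gam_one : actB (gam, 1) = (gam, gam) := by
  rw [actB_apply, Prod.mk.injEq]
  constructor
  · linear_combination gam_sq + CharTwo.two_eq_zero (R := F4)
  · ring

lemma add_one_pow_four_eq_pow_four_sub_one {R : Type*} [CommRing R] [CharP R 2] (x : R) :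
    (x + 1) ^ 4 = x ^ 4 - 1 := by
  rw [CharTwo.sub_eq_add, show 4 = 2 ^ 2 by rfl, add_pow_char_pow, one_pow]

noncomputable def actR4 : R4 →ₐ[ZMod 2] Module.End (ZMod 2) (F4 × F4) :=
  Ideal.Quotient.liftₐ _ (aeval actB) fun p hp => by
    obtain ⟨q, rfl⟩ := Ideal.mem_span_singleton'.1 hp
    rw [map_mul, add_one_pow_four_eq_pow_four_sub_one, map_sub, map_pow, aeval_X, actB_pow_four,
      map_one, sub_self, mul_zero]

lemma actR4_bbar : actR4 bbar = actB :=
  aeval_X actB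

noncomputable def orbitMap : R4 →ₗ[ZMod 2] F4 × F4 :=
  (LinearMap.applyₗ ((0, 1) : F4 × F4)).comp actR4.toLinearMap

lemma orbitMap_bbar_mul (r : R4) : orbitMap (bbar * r) = actB (orbitMap r) := by
  change actR4 (bbar * r) (0, 1) = actB (actR4 r (0, 1))
  rw [map_mul, actR4_bbar, Module.End.mul_apply]

lemma orbitMap_one : orbitMap 1 = (0, 1) := by
  change actR4 1 (0, 1) = (0, 1)
  rw [map_one, Module.End.one_apply]

lemma orbitMap_bbar : orbitMap bbar = (1, gam) := by
  rw [← mul_one bbar, orbitMap_bbar_mul, orbitMap_one, actB_zero_one]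

lemma orbitMap_bbar_sq : orbitMap (bbar ^ 2) = (gam, 1) := by
  rw [sq bbar, orbitMap_bbar_mul, orbitMap_bbar, actB_one_gam]

lemma orbitMap_bbar_pow_three : orbitMap (bbar ^ 3) = (gam, gam) := by
  rw [pow_succ' bbar 2, orbitMap_bbar_mul, orbitMap_bbar_sq, actB_gam_one]

lemma orbitMap_one_add_bbar_add_bbar_sq_add_bbar_pow_three :
    orbitMap (1 + bbar + bbar ^ 2 + bbar ^ 3) = (1, 0) := by
  simp only [map_add, orbitMap_one, orbitMap_bbar, orbitMap_bbar_sq, orbitMap_bbar_pow_three,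
    Prod.mk_add_mk, Prod.mk.injEq]
  constructor
  · linear_combination gam * CharTwo.two_eq_zero (R := F4)
  · linear_combination (1 + gam) * CharTwo.two_eq_zero (R := F4)

lemma orbitMap_one_add_bbar_sq : orbitMap (1 + bbar ^ 2) = (gam, 0) := by
  simp only [map_add, orbitMap_one, orbitMap_bbar_sq, Prod.mk_add_mk, Prod.mk.injEq]
  constructor
  · ring
  · linear_combination CharTwo.two_eq_zero (R := F4)

lemma orbitMap_one_add_bbar_sq_add_bbar_pow_three :
    orbitMap (1 + bbar ^ 2 + bbar ^ 3) = (0, gam) := by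
  simp only [map_add, orbitMap_one, orbitMap_bbar_sq, orbitMap_bbar_pow_three, Prod.mk_add_mk,
    Prod.mk.injEq]
  constructor
  · linear_combination gam * CharTwo.two_eq_zero (R := F4)
  · linear_combination CharTwo.two_eq_zero (R := F4)

lemma orbitMap_surjective : Function.Surjective orbitMap := by
  rw [← LinearMap.range_eq_top, eq_top_iff, ← Submodule.prod_top, ← span_one_gam,
    ← LinearMap.span_inl_union_inr, Submodule.span_le]
  rintro _ (⟨u, hu, rfl⟩ | ⟨v, hv, rfl⟩)
  · rcases hu with rfl | rfl
    · exact ⟨_, orbitMap_one_add_bbar_add_bbar_sq_add_bbar_pow_three⟩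
    · exact ⟨_, orbitMap_one_add_bbar_sq⟩
  · rcases hv with rfl | rfl
    · exact ⟨_, orbitMap_one⟩
    · exact ⟨_, orbitMap_one_add_bbar_sq_add_bbar_pow_three⟩

lemma orbitMap_bijective : Function.Bijective orbitMap :=
  ⟨(LinearMap.injective_iff_surjective_of_finrank_eq_finrank
    (by rw [finrank_R4, Module.finrank_prod, finrank_F4])).2 orbitMap_surjective,
    orbitMap_surjective⟩

lemma sdRels_of_zero_pow_three : (PresentedGroup.of 0 : PresentedGroup sdRels) ^ 3 = 1 :=
  (map_pow _ _ _).symm.trans (PresentedGroup.one_of_mem (Or.inl rfl))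

lemma sdRels_of_one_pow_four : (PresentedGroup.of 1 : PresentedGroup sdRels) ^ 4 = 1 :=
  (map_pow _ _ _).symm.trans (PresentedGroup.one_of_mem (Or.inr (Or.inl rfl)))

lemma sdRels_of_one_mul_of_zero : (PresentedGroup.of 1 : PresentedGroup sdRels) *
    PresentedGroup.of 0 = PresentedGroup.of 0 ^ 2 * PresentedGroup.of 1 := by
  have := PresentedGroup.mk_eq_mk_of_mul_inv_mem (rels := sdRels) (Or.inr (Or.inr rfl))
  simp only [map_mul, map_pow] at this
  exact this

lemma sdRels_exists_eq_pow_mul_pow (g : PresentedGroup sdRels) :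
    ∃ i < 3, ∃ j < 4, g = PresentedGroup.of 0 ^ i * PresentedGroup.of 1 ^ j := by
  have hg : g ∈ Subgroup.closure {PresentedGroup.of 0, PresentedGroup.of 1} :=
    PresentedGroup.generated_by _ _ (fun i => Subgroup.subset_closure (by fin_cases i <;> simp)) g
  obtain ⟨i, j, rfl⟩ := exists_eq_pow_mul_pow_of_mem_closure
    (isOfFinOrder_iff_pow_eq_one.2 ⟨3, by norm_num, sdRels_of_zero_pow_three⟩)
    (isOfFinOrder_iff_pow_eq_one.2 ⟨4, by norm_num, sdRels_of_one_pow_four⟩)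
    sdRels_of_one_mul_of_zero hg
  refine ⟨i % 3, Nat.mod_lt _ (by norm_num), j % 4, Nat.mod_lt _ (by norm_num), ?_⟩
  rw [← pow_eq_pow_mod i sdRels_of_zero_pow_three, ← pow_eq_pow_mod j sdRels_of_one_pow_four]

noncomputable def unitC : (Module.End (ZMod 2) (F4 × F4))ˣ :=
  Units.ofPowEqOne actC 3 actC_pow_three (by norm_num)

noncomputable def unitB : (Module.End (ZMod 2) (F4 × F4))ˣ :=
  Units.ofPowEqOne actB 4 actB_pow_four (by norm_num)

lemma lift_eq_one_of_mem_sdRels : ∀ r ∈ sdRels, FreeGroup.lift ![unitC, unitB] r = 1 := by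
  rintro r (rfl | rfl | rfl)
  · simp [unitC]
  · simp [unitB]
  · simp only [map_mul, map_inv, map_pow, FreeGroup.lift_apply_of, mul_inv_eq_one]
    exact Units.ext actB_mul_actC

noncomputable def U4 : Representation (ZMod 2) (PresentedGroup sdRels) (F4 × F4) :=
  (Units.coeHom _).comp (PresentedGroup.toGroup lift_eq_one_of_mem_sdRels)

lemma U4_of_zero : U4 (PresentedGroup.of 0) = actC := by
  simp [U4, PresentedGroup.toGroup.of, unitC]

lemma U4_of_one : U4 (PresentedGroup.of 1) = actB := by
  simp [U4, PresentedGroup.toGroup.of, unitB]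

lemma actB_pow_zero_one_fst_ne_zero {j : ℕ} (hj0 : 0 < j) (hj : j < 4) :
    ((actB ^ j) (0, 1)).1 ≠ 0 := by
  interval_cases j <;>
    simp [pow_succ, actB_zero_one, actB_one_gam, actB_gam_one, gam_ne_zero]

lemma U4_injective : Function.Injective U4 := by
  refine (injective_iff_map_eq_one U4).2 fun g hg => ?_
  obtain ⟨i, hi, j, hj, rfl⟩ := sdRels_exists_eq_pow_mul_pow g
  have hfix : gam ^ i • (actB ^ j) (0, 1) = (0, 1) := by
    rw [← actC_pow_apply, ← Module.End.mul_apply, ← U4_of_zero, ← U4_of_one, ← map_pow,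
      ← map_pow, ← map_mul, hg, Module.End.one_apply]
  obtain rfl : j = 0 := by
    by_contra hj0
    refine actB_pow_zero_one_fst_ne_zero (Nat.pos_of_ne_zero hj0) hj ?_
    simpa [gam_ne_zero] using congrArg Prod.fst hfix
  obtain rfl : i = 0 := by
    by_contra hi0
    exact pow_ne_one_of_lt_orderOf hi0 (orderOf_gam ▸ hi)
      (by simpa using congrArg Prod.snd hfix)
  simp

/-- `U₄ = F₄ ⊕ F₄·x` with `c` acting by multiplication and `b·1 = 1, b·c = c²,
b·x = 1 + c·x` (so `b·(u,v) = (u² + v², c·v²)`) is a well-defined faithful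
4-dimensional `F₂`-representation of `Γ_Δ`, and its restriction to `C₄ = ⟨b⟩` is
isomorphic to the regular representation `F₂[b]/(b+1)⁴` via
`1 ↦ 1+b+b²+b³`, `c ↦ 1+b²`, `x ↦ 1`, `cx ↦ 1+b²+b³`. -/
theorem stmt_13 :
    ∃ φ : Representation (ZMod 2) (PresentedGroup sdRels) (F4 × F4),
      Function.Injective φ ∧
      Module.finrank (ZMod 2) (F4 × F4) = 4 ∧
      (∀ u v : F4, φ (PresentedGroup.of 0) (u, v) = (gam * u, gam * v)) ∧
      (∀ u v : F4, φ (PresentedGroup.of 1) (u, v) =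
        (u ^ 2 + v ^ 2, gam * v ^ 2)) ∧
      ∃ e : (F4 × F4) ≃ₗ[ZMod 2] R4,
        (∀ w, e (φ (PresentedGroup.of 1) w) = bbar * e w) ∧
        e (1, 0) = 1 + bbar + bbar ^ 2 + bbar ^ 3 ∧
        e (gam, 0) = 1 + bbar ^ 2 ∧
        e (0, 1) = 1 ∧
        e (0, gam) = 1 + bbar ^ 2 + bbar ^ 3 := by
  let E := LinearEquiv.ofBijective orbitMap orbitMap_bijective
  have hE : ∀ w r, E.symm w = r ↔ orbitMap r = w := fun w r => by
    rw [LinearEquiv.symm_apply_eq, LinearEquiv.ofBijective_apply, eq_comm]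
  refine ⟨U4, U4_injective, by rw [Module.finrank_prod, finrank_F4],
    fun u v => by rw [U4_of_zero, actC_apply], fun u v => by rw [U4_of_one, actB_apply],
    E.symm, fun w => ?_, (hE _ _).2 orbitMap_one_add_bbar_add_bbar_sq_add_bbar_pow_three,
    (hE _ _).2 orbitMap_one_add_bbar_sq, (hE _ _).2 orbitMap_one,
    (hE _ _).2 orbitMap_one_add_bbar_sq_add_bbar_pow_three⟩
  rw [hE, orbitMap_bbar_mul, U4_of_one]
  exact congrArg actB (E.apply_symm_apply w)
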